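/- arXiv:math/0303301 — 2 statements merged into one kernel-verified Lean document; each statement's English description precedes it below -/
import Mathlib

section
/- Let α, β be nonzero real numbers with α ≠ β, let λ ≥ 1 and set t = (λ + 1/λ)/2. If t > ψ(α,β), then there exist linearly independent vectors v₁, v₂ ∈ ℝ² such that {v ∈ ℝ² : det(X_α(v), X_β^λ(v)) = 0} = ℝ·v₁ ∪ ℝ·v₂; that is, the tangency set of the pair (L_α, L_β^λ) is the union of two distinct lines through the origin. -/
noncomputable def psi (α β : ℝ) : ℝ :=
  (-(α * β) + |α * β| * Real.sqrt ((α ^ 2 + 1) * (β ^ 2 + 1))) / (α ^ 2 * β ^ 2)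

/-- `det2 v w = v₁w₂ − v₂w₁`. -/
def det2 (v w : ℝ × ℝ) : ℝ := v.1 * w.2 - v.2 * w.1

/-- The logarithmic vector field `X_α(x,y) = (x − αy, αx + y)`. -/
def Xlog (α : ℝ) (v : ℝ × ℝ) : ℝ × ℝ := (v.1 - α * v.2, α * v.1 + v.2)

/-- The pushforward of `X_β` by `B_λ = diag(1,λ)`. -/
noncomputable def XlogLam (β l : ℝ) (v : ℝ × ℝ) : ℝ × ℝ :=
  (v.1 - (β / l) * v.2, l * β * v.1 + v.2)

/-!
The tangency set is the zero set of the binary quadratic form `v ↦ det2 (X_α v) (X_β^λ v)`.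
Clearing the denominator `α²β²` in `ψ(α,β) < t` and squaring shows that this form has positive
discriminant, so it splits over `ℝ` into two linear forms with independent kernels.
-/

lemma linearIndependent_pair_of_det2_ne_zero {v w : ℝ × ℝ} (h : det2 v w ≠ 0) :
    LinearIndependent ℝ ![v, w] := by
  rw [LinearIndependent.pair_iff]
  intro a b hab
  have h₁ : a * v.1 + b * w.1 = 0 := congrArg Prod.fst hab
  have h₂ : a * v.2 + b * w.2 = 0 := congrArg Prod.snd hab
  have ha : a * det2 v w = 0 := by unfold det2; linear_combination w.2 * h₁ - w.1 * h₂
  have hb : b * det2 v w = 0 := by unfold det2; linear_combination v.1 * h₂ - v.2 * h₁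
  exact ⟨(mul_eq_zero.mp ha).resolve_right h, (mul_eq_zero.mp hb).resolve_right h⟩

lemma setOf_linear_form_eq_zero {p q : ℝ} (h : (p, q) ≠ 0) :
    {v : ℝ × ℝ | p * v.1 + q * v.2 = 0} = Set.range fun c : ℝ => c • (-q, p) := by
  ext ⟨x, y⟩
  simp only [Set.mem_ofPred_eq, Set.mem_range, Prod.smul_mk, smul_eq_mul, Prod.mk.injEq]
  constructor
  · intro hxy
    by_cases hp : p = 0
    · have hq : q ≠ 0 := fun hq => h (by simp [hp, hq])
      refine ⟨-x / q, by field_simp, ?_⟩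
      have : q * y = 0 := by simpa [hp] using hxy
      simp [hp, (mul_eq_zero.mp this).resolve_left hq]
    · exact ⟨y / p, by field_simp; linear_combination -hxy, by field_simp⟩
  · rintro ⟨c, rfl, rfl⟩
    ring

lemma exists_factorization_of_discrim_pos {A B C : ℝ} (hD : 0 < discrim A B C) :
    ∃ p q r s : ℝ, p * s - q * r ≠ 0 ∧
      ∀ x y : ℝ, A * x ^ 2 + B * (x * y) + C * y ^ 2 = (p * x + q * y) * (r * x + s * y) := by
  by_cases hA : A = 0
  · have hB : B ≠ 0 := by rintro rfl; simp [discrim, hA] at hD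
    exact ⟨0, 1, B, C, by simpa using hB, fun x y => by rw [hA]; ring⟩
  · -- the factors vanish on the lines `x = ((-B ± √D) / (2A)) y` through the roots of `A r² + B r + C`
    set s := Real.sqrt (discrim A B C)
    have hs : s ^ 2 = B ^ 2 - 4 * A * C := Real.sq_sqrt hD.le
    refine ⟨1, (B + s) / (2 * A), A, (B - s) / 2, ?_, fun x y => ?_⟩
    · field_simp
      linarith [Real.sqrt_pos.mpr hD]
    · field_simp
      linear_combination y ^ 2 * hs

lemma exists_zero_set_eq_union_lines_of_discrim_pos {A B C : ℝ} (hD : 0 < discrim A B C) :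
    ∃ v₁ v₂ : ℝ × ℝ, LinearIndependent ℝ ![v₁, v₂] ∧
      {v : ℝ × ℝ | A * v.1 ^ 2 + B * (v.1 * v.2) + C * v.2 ^ 2 = 0} =
        (Set.range fun c : ℝ => c • v₁) ∪ (Set.range fun c : ℝ => c • v₂) := by
  obtain ⟨p, q, r, s, hdet, hfactor⟩ := exists_factorization_of_discrim_pos hD
  have hpq : (p, q) ≠ 0 := fun h => hdet (by simp_all [Prod.ext_iff])
  have hrs : (r, s) ≠ 0 := fun h => hdet (by simp_all [Prod.ext_iff])
  refine ⟨(-q, p), (-s, r), linearIndependent_pair_of_det2_ne_zero ?_, ?_⟩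
  · unfold det2
    contrapose! hdet
    linear_combination hdet
  · simp only [hfactor, mul_eq_zero, Set.ofPred_or]
    rw [setOf_linear_form_eq_zero hpq, setOf_linear_form_eq_zero hrs]

lemma det2_Xlog_XlogLam (α β : ℝ) {l : ℝ} (hl : l ≠ 0) (v : ℝ × ℝ) :
    det2 (Xlog α v) (XlogLam β l v) =
      (l * β - α) * v.1 ^ 2 + α * β * (1 / l - l) * (v.1 * v.2) + (β / l - α) * v.2 ^ 2 := by
  simp only [det2, Xlog, XlogLam]
  field_simp
  ring

lemma discrim_pos_of_psi_lt {α β l : ℝ} (hα : α ≠ 0) (hβ : β ≠ 0) (hl : 0 < l)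
    (ht : psi α β < (l + 1 / l) / 2) :
    0 < discrim (l * β - α) (α * β * (1 / l - l)) (β / l - α) := by
  set t := (l + 1 / l) / 2 with ht_def
  have hαβ_pos : 0 < α ^ 2 * β ^ 2 := by positivity
  set S := Real.sqrt ((α ^ 2 + 1) * (β ^ 2 + 1))
  have hS : S ^ 2 = (α ^ 2 + 1) * (β ^ 2 + 1) := Real.sq_sqrt (by positivity)
  have hlt : |α * β| * S < t * (α ^ 2 * β ^ 2) + α * β := by
    rw [psi, div_lt_iff₀ hαβ_pos] at ht
    linarith
  have hsq : α ^ 2 * β ^ 2 * ((α ^ 2 + 1) * (β ^ 2 + 1)) < (t * (α ^ 2 * β ^ 2) + α * β) ^ 2 :=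
    calc α ^ 2 * β ^ 2 * ((α ^ 2 + 1) * (β ^ 2 + 1)) = (|α * β| * S) ^ 2 := by
          rw [mul_pow, sq_abs, hS]; ring
      _ < _ := pow_lt_pow_left₀ hlt (by positivity) two_ne_zero
  have hdiscrim : α ^ 2 * β ^ 2 * discrim (l * β - α) (α * β * (1 / l - l)) (β / l - α) =
      4 * ((t * (α ^ 2 * β ^ 2) + α * β) ^ 2 - α ^ 2 * β ^ 2 * ((α ^ 2 + 1) * (β ^ 2 + 1))) := by
    rw [discrim, ht_def]
    field_simp
    ring
  exact pos_of_mul_pos_right (hdiscrim ▸ by linarith) hαβ_pos.le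

theorem tangency_set_two_lines_general (α β l : ℝ) (hα : α ≠ 0) (hβ : β ≠ 0)
    (hl : 1 ≤ l) (ht : psi α β < (l + 1 / l) / 2) :
    ∃ v₁ v₂ : ℝ × ℝ, LinearIndependent ℝ ![v₁, v₂] ∧
      {v : ℝ × ℝ | det2 (Xlog α v) (XlogLam β l v) = 0} =
        (Set.range fun c : ℝ => c • v₁) ∪ (Set.range fun c : ℝ => c • v₂) := by
  have hl₀ : 0 < l := zero_lt_one.trans_le hl
  simp only [det2_Xlog_XlogLam α β hl₀.ne']
  exact exists_zero_set_eq_union_lines_of_discrim_pos (discrim_pos_of_psi_lt hα hβ hl₀ ht)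

theorem tangency_set_two_lines (α β l : ℝ) (hα : α ≠ 0) (hβ : β ≠ 0)
    (hαβ : α ≠ β) (hl : 1 ≤ l) (ht : psi α β < (l + 1 / l) / 2) :
    ∃ v₁ v₂ : ℝ × ℝ, LinearIndependent ℝ ![v₁, v₂] ∧
      {v : ℝ × ℝ | det2 (Xlog α v) (XlogLam β l v) = 0} =
        (Set.range fun c : ℝ => c • v₁) ∪ (Set.range fun c : ℝ => c • v₂) :=
  tangency_set_two_lines_general α β l hα hβ hl ht
end

section
/- Let α ≠ 0, γ > 0, θ be real numbers, λ > 0, and set s = (λ − 1/λ)/2. Then det(Y_γ(v), Z_{α,λ,θ}(v)) ≠ 0 for every v ∈ ℝ² with v ≠ (0,0) if and only if D(α,γ,θ,s) < 0, where D(α,γ,θ,s) = 4α²cos²θ sin²θ (γ−1)² s² + 4α cosθ sinθ (1−γ²) s + (γ² − 2γ(1+2α²) + 1). -/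
/-- The real (node) vector field `Y_γ(x,y) = (x, γy)`. -/
def Ynode (γ : ℝ) (v : ℝ × ℝ) : ℝ × ℝ := (v.1, γ * v.2)

/-- The rotation matrix by angle `θ`. -/
noncomputable def rotM (θ : ℝ) : Matrix (Fin 2) (Fin 2) ℝ :=
  !![Real.cos θ, -Real.sin θ; Real.sin θ, Real.cos θ]

/-- The matrix `M_α = [[1, −α],[α, 1]]` of the logarithmic vector field. -/
def Mlog (α : ℝ) : Matrix (Fin 2) (Fin 2) ℝ := !![1, -α; α, 1]

/-- `B_λ = diag(1,λ)`. -/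
def BM (l : ℝ) : Matrix (Fin 2) (Fin 2) ℝ := !![1, 0; 0, l]

/-- `B_λ⁻¹ = diag(1,1/λ)`. -/
noncomputable def BMinv (l : ℝ) : Matrix (Fin 2) (Fin 2) ℝ := !![1, 0; 0, 1 / l]

/-- The matrix `R_θ B_λ M_α B_λ⁻¹ R_{−θ}` of the pushforward of the
logarithmic vector field `X_α` by `R_θ ∘ B_λ`. -/
noncomputable def Zmat (α l θ : ℝ) : Matrix (Fin 2) (Fin 2) ℝ :=
  rotM θ * BM l * Mlog α * BMinv l * rotM (-θ)

/-- The pushforward of the logarithmic vector field `X_α` by `R_θ ∘ B_λ`,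
as a vector field on `ℝ × ℝ`. -/
noncomputable def Zfun (α l θ : ℝ) (v : ℝ × ℝ) : ℝ × ℝ :=
  ((Zmat α l θ).mulVec ![v.1, v.2] 0, (Zmat α l θ).mulVec ![v.1, v.2] 1)

/-- The discriminant `D(α,γ,θ,s)` of the tangency form. -/
noncomputable def Ddisc (α γ θ s : ℝ) : ℝ :=
  4 * α ^ 2 * Real.cos θ ^ 2 * Real.sin θ ^ 2 * (γ - 1) ^ 2 * s ^ 2 +
  4 * α * Real.cos θ * Real.sin θ * (1 - γ ^ 2) * s +
  (γ ^ 2 - 2 * γ * (1 + 2 * α ^ 2) + 1)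

/-!
`det(Y_γ(v), Z(v))` is a binary quadratic form in `v`, and after `cos² θ + sin² θ = 1` its
discriminant is exactly `D(α, γ, θ, s)`. A real binary quadratic form vanishes only at the
origin iff its discriminant is negative.
-/

open Real

section BinaryQuadraticForm

variable {K : Type*} [Field K] [LinearOrder K] [IsStrictOrderedRing K]

/- `4a·Q(x,y) = (2ax + by)² − discrim·y²` writes `4a·Q` as a sum of two squares when the
discriminant is negative. -/
lemma quadForm_ne_zero_of_discrim_neg {a b c : K} (hd : discrim a b c < 0) {v : K × K}
    (hv : v ≠ 0) : a * v.1 ^ 2 + b * v.1 * v.2 + c * v.2 ^ 2 ≠ 0 := by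
  obtain ⟨x, y⟩ := v
  intro hQ
  have ha : a ≠ 0 := by
    rintro rfl
    exact (sq_nonneg b).not_gt (by simpa [discrim] using hd)
  have hsq : (2 * a * x + b * y) ^ 2 + (-discrim a b c) * y ^ 2 = 0 := by
    rw [discrim]; linear_combination 4 * a * hQ
  obtain ⟨hlin, hyy⟩ := (add_eq_zero_iff_of_nonneg (sq_nonneg _)
    (mul_nonneg (neg_nonneg.2 hd.le) (sq_nonneg y))).1 hsq
  have hy : y = 0 := pow_eq_zero_iff two_ne_zero |>.1 <|
    (mul_eq_zero.1 hyy).resolve_left (neg_ne_zero.2 hd.ne)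
  have hx : x = 0 := by
    subst hy
    simpa [ha] using hlin
  exact hv (by simp [hx, hy])

end BinaryQuadraticForm

lemma exists_quadForm_eq_zero_of_discrim_nonneg {a b c : ℝ} (hd : 0 ≤ discrim a b c) :
    ∃ v : ℝ × ℝ, v ≠ 0 ∧ a * v.1 ^ 2 + b * v.1 * v.2 + c * v.2 ^ 2 = 0 := by
  rcases eq_or_ne a 0 with rfl | ha
  · exact ⟨(1, 0), by simp, by simp⟩
  · obtain ⟨x, hx⟩ := exists_quadratic_eq_zero ha ⟨√(discrim a b c), (mul_self_sqrt hd).symm⟩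
    exact ⟨(x, 1), by simp, by linear_combination hx⟩

lemma forall_quadForm_ne_zero_iff_discrim_neg (a b c : ℝ) :
    (∀ v : ℝ × ℝ, v ≠ 0 → a * v.1 ^ 2 + b * v.1 * v.2 + c * v.2 ^ 2 ≠ 0) ↔
      discrim a b c < 0 := by
  refine ⟨fun h => ?_, fun hd v hv => quadForm_ne_zero_of_discrim_neg hd hv⟩
  by_contra! hd
  obtain ⟨v, hv, hQ⟩ := exists_quadForm_eq_zero_of_discrim_nonneg hd
  exact h v hv hQ

lemma det2_Ynode_Zfun (α γ θ : ℝ) {l : ℝ} (hl : l ≠ 0) (v : ℝ × ℝ) :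
    det2 (Ynode γ v) (Zfun α l θ v) =
      α * (l * cos θ ^ 2 + sin θ ^ 2 / l) * v.1 ^ 2 +
      ((1 - γ) + cos θ * sin θ * α * (l - 1 / l) * (1 + γ)) * v.1 * v.2 +
      γ * α * (cos θ ^ 2 / l + l * sin θ ^ 2) * v.2 ^ 2 := by
  simp only [det2, Ynode, Zfun, Zmat, rotM, BM, Mlog, BMinv, Matrix.mul_fin_two,
    Matrix.mulVec, dotProduct, Fin.sum_univ_two, cos_neg, sin_neg,
    Matrix.cons_val', Matrix.cons_val_zero, Matrix.cons_val_one,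
    Matrix.empty_val', Matrix.cons_val_fin_one, Matrix.of_apply]
  field_simp
  linear_combination (v.1 * l * v.2 * (1 - γ)) * sin_sq_add_cos_sq θ

lemma Ddisc_eq_discrim (α γ θ : ℝ) {l : ℝ} (hl : l ≠ 0) :
    Ddisc α γ θ ((l - 1 / l) / 2) =
      discrim (α * (l * cos θ ^ 2 + sin θ ^ 2 / l))
        ((1 - γ) + cos θ * sin θ * α * (l - 1 / l) * (1 + γ))
        (γ * α * (cos θ ^ 2 / l + l * sin θ ^ 2)) := by
  rw [Ddisc, discrim]
  field_simp
  linear_combination (16 * α ^ 2 * γ * l ^ 2 * (sin θ ^ 2 + cos θ ^ 2 + 1)) * sin_sq_add_cos_sq θ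

theorem transverse_iff_D_neg_general (α γ θ l : ℝ)
    (hl : 0 < l) :
    (∀ v : ℝ × ℝ, v ≠ 0 → det2 (Ynode γ v) (Zfun α l θ v) ≠ 0) ↔
      Ddisc α γ θ ((l - 1 / l) / 2) < 0 := by
  simp only [det2_Ynode_Zfun α γ θ hl.ne', Ddisc_eq_discrim α γ θ hl.ne']
  exact forall_quadForm_ne_zero_iff_discrim_neg _ _ _

theorem transverse_iff_D_neg (α γ θ l : ℝ) (hα : α ≠ 0) (hγ : 0 < γ)
    (hl : 0 < l) :
    (∀ v : ℝ × ℝ, v ≠ 0 → det2 (Ynode γ v) (Zfun α l θ v) ≠ 0) ↔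
      Ddisc α γ θ ((l - 1 / l) / 2) < 0 :=
  transverse_iff_D_neg_general α γ θ l hl
end
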